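/- arXiv:2406.04329 — 3 statements merged into one kernel-verified Lean document; each statement's English description precedes it below -/
import Mathlib

section
/- For 0 < α_t ≤ α_s ≤ 1, the product (α_s I + (1−α_s) 𝟏 e_m^⊤)⁻¹ (α_t I + (1−α_t) 𝟏 e_m^⊤) equals (α_t/α_s) I + (1 − α_t/α_s) 𝟏 e_m^⊤. -/
open Matrix

private lemma EE (m : ℕ) :
    (Matrix.vecMulVec (fun _ => (1 : ℝ)) (Pi.single (Fin.last m) 1) *
      Matrix.vecMulVec (fun _ => (1 : ℝ)) (Pi.single (Fin.last m) 1)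
        : Matrix (Fin (m + 1)) (Fin (m + 1)) ℝ) =
    Matrix.vecMulVec (fun _ => (1 : ℝ)) (Pi.single (Fin.last m) 1) := by
  ext i j
  simp [Matrix.mul_apply, Matrix.vecMulVec_apply, Pi.single_apply,
    Finset.sum_ite_eq']

private lemma key (m : ℕ) (a b : ℝ) :
    (a • (1 : Matrix (Fin (m + 1)) (Fin (m + 1)) ℝ) +
        (1 - a) • Matrix.vecMulVec (fun _ => (1 : ℝ)) (Pi.single (Fin.last m) 1)) *
      (b • (1 : Matrix (Fin (m + 1)) (Fin (m + 1)) ℝ) +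
        (1 - b) • Matrix.vecMulVec (fun _ => (1 : ℝ)) (Pi.single (Fin.last m) 1)) =
    (a * b) • (1 : Matrix (Fin (m + 1)) (Fin (m + 1)) ℝ) +
        (1 - a * b) • Matrix.vecMulVec (fun _ => (1 : ℝ)) (Pi.single (Fin.last m) 1) := by
  set E := Matrix.vecMulVec (fun _ => (1 : ℝ)) (Pi.single (Fin.last m) 1) with hE
  have hEE : E * E = E := EE m
  simp only [add_mul, mul_add, Matrix.smul_mul, Matrix.mul_smul, one_mul, mul_one, hEE,
    smul_smul]
  rw [add_assoc, ← add_smul, ← add_smul]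
  congr 1
  · rw [mul_comm]
  · rw [show b * (1 - a) + ((1 - b) * a + (1 - b) * (1 - a)) = 1 - a * b by ring]

/-- For `0 < α_t ≤ α_s ≤ 1`, the product `Q̄(s)⁻¹ Q̄(t)` of the marginal transition
matrices `Q̄(u) = α_u I + (1−α_u) 𝟏 eₘᵀ` equals `(α_t/α_s) I + (1 − α_t/α_s) 𝟏 eₘᵀ`. -/
theorem stmt4 (m : ℕ) (αs αt : ℝ) (h0 : 0 < αt) (hts : αt ≤ αs) (hs1 : αs ≤ 1)
    (Qbar : ℝ → Matrix (Fin (m + 1)) (Fin (m + 1)) ℝ)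
    (hQbar : ∀ α : ℝ, Qbar α =
      α • (1 : Matrix (Fin (m + 1)) (Fin (m + 1)) ℝ) +
        (1 - α) • Matrix.vecMulVec (fun _ => (1 : ℝ)) (Pi.single (Fin.last m) 1)) :
    (Qbar αs)⁻¹ * Qbar αt =
      (αt / αs) • (1 : Matrix (Fin (m + 1)) (Fin (m + 1)) ℝ) +
        (1 - αt / αs) • Matrix.vecMulVec (fun _ => (1 : ℝ)) (Pi.single (Fin.last m) 1) := by
  have hαs : (0 : ℝ) < αs := lt_of_lt_of_le h0 hts
  have hinv : Qbar αs *
      (αs⁻¹ • (1 : Matrix (Fin (m + 1)) (Fin (m + 1)) ℝ) +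
        (1 - αs⁻¹) • Matrix.vecMulVec (fun _ => (1 : ℝ)) (Pi.single (Fin.last m) 1)) = 1 := by
    rw [hQbar, key, mul_inv_cancel₀ hαs.ne']
    simp
  rw [Matrix.inv_eq_right_inv hinv, hQbar, key, inv_mul_eq_div]
end

section
/- Let 0 ≤ α_t < α_s ≤ 1 and let ξ = (α_s − α_t)/(1 − α_t) ∈ [0,1]. For x₀ a one-hot vector in Δ^{m+1} supported on {0,…,m−1} and μ ∈ Δ^{m+1} a probability vector with μ_m = 0 and μ_k > 0 whenever (x₀)_k > 0, the KL divergence between the two-point distributions p = ξ x₀ + (1−ξ) e_m and r = ξ μ + (1−ξ) e_m (as distributions on {0,…,m}) equals −ξ · x₀^⊤ log μ, where log is applied elementwise. -/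
open Finset

/-- KL between the true and model single-step reversals from the mask state is a
scaled cross-entropy: with `ξ = (α_s−α_t)/(1−α_t) ∈ [0,1]`, `x₀` one-hot on a
non-mask coordinate, `μ` a probability vector with `μ_m = 0` and `μ_k > 0` on the
support of `x₀`, and `p = ξ x₀ + (1−ξ) e_m`, `r = ξ μ + (1−ξ) e_m`, we have
`KL(p‖r) = −ξ · x₀ᵀ log μ`. -/
theorem stmt8 (m : ℕ) (αs αt : ℝ) (h0 : 0 ≤ αt) (hts : αt < αs) (hs1 : αs ≤ 1)
    (ξ : ℝ) (hξ : ξ = (αs - αt) / (1 - αt))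
    (x₀ : Fin (m + 1) → ℝ)
    (hx₀ : ∃ i : Fin (m + 1), i ≠ Fin.last m ∧ x₀ = Pi.single i 1)
    (μ : Fin (m + 1) → ℝ) (hμ0 : ∀ k, 0 ≤ μ k) (hμ1 : ∑ k, μ k = 1)
    (hμm : μ (Fin.last m) = 0) (hμpos : ∀ k, 0 < x₀ k → 0 < μ k)
    (p r : Fin (m + 1) → ℝ)
    (hp : ∀ k, p k = ξ * x₀ k + (1 - ξ) * (if k = Fin.last m then 1 else 0))
    (hr : ∀ k, r k = ξ * μ k + (1 - ξ) * (if k = Fin.last m then 1 else 0)) :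
    ∑ k, p k * Real.log (p k / r k) = -ξ * ∑ k, x₀ k * Real.log (μ k) := by
  obtain ⟨i, hi, hx⟩ := hx₀
  have hαt1 : αt < 1 := lt_of_lt_of_le hts hs1
  have hξpos : 0 < ξ := by
    rw [hξ]; exact div_pos (by linarith) (by linarith)
  have hξne : ξ ≠ 0 := ne_of_gt hξpos
  rw [Finset.mul_sum]
  apply Finset.sum_congr rfl
  intro k _
  rcases eq_or_ne k i with hk | hk
  · subst hk
    have hx1 : x₀ k = 1 := by rw [hx, Pi.single_eq_same]
    have hpk : p k = ξ := by rw [hp, hx1, if_neg hi]; ring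
    have hrk : r k = ξ * μ k := by rw [hr, if_neg hi]; ring
    have hdiv : p k / r k = (μ k)⁻¹ := by
      rw [hpk, hrk]
      rw [show ξ / (ξ * μ k) = ξ * 1 / (ξ * μ k) by ring,
        mul_div_mul_left 1 (μ k) hξne, one_div]
    rw [hdiv, Real.log_inv, hpk, hx1]
    ring
  · have hx0 : x₀ k = 0 := by rw [hx, Pi.single_eq_of_ne hk]
    rcases eq_or_ne k (Fin.last m) with hl | hl
    · have hpk : p k = 1 - ξ := by rw [hp, hx0, if_pos hl]; ring
      have hrk : r k = 1 - ξ := by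
        rw [hr, hl, hμm, if_pos rfl]; ring
      rw [hpk, hrk, hx0]
      rcases eq_or_ne (1 - ξ) 0 with h | h
      · rw [h]; ring
      · rw [div_self h, Real.log_one]; ring
    · have hpk : p k = 0 := by rw [hp, hx0, if_neg hl]; ring
      rw [hpk, hx0]; ring
end

section
/- Let s: ℝ → ℝ be continuous on [t₁,1]. For each positive integer T and i ∈ {2,…,T}, set s(i)=(i−1)/T, t(i)=i/T, and define L_T = Σ_{i=2}^T g(α_{s(i)}, α_{t(i)}) h(t(i)) where g(a,b) = (a−b)/(1−b) and α is continuously differentiable on [0,1] with α_t < 1 on (0,1], and h is continuous. Then lim_{T→∞} L_T = −∫_0^1 (α'_t/(1−α_t)) h(t) dt. -/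
/-!
With `φ = h / (1 - α)`, the `i`-th summand is `-(α(i/T) - α((i-1)/T)) φ(i/T)`, so `L_T` is minus a
right-endpoint Riemann–Stieltjes sum of `φ` against `α`. On a cell `[s, t]` its error is
`(α t - α s) φ t - ∫_s^t α' φ = ∫_s^t α' (φ t - φ u)`, which is `o(t - s)` uniformly because `φ` is
uniformly continuous on `[ε/2, 1]`, where `α < 1`. The cutoff `i/T ≥ ε` starts the sum at a grid
point within `1/T` of `ε`, so the integrals converge to the one over `[ε, 1]`.
-/

open Filter Topology MeasureTheory Set

section RiemannStieltjes

variable {F f φ : ℝ → ℝ}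

theorem abs_sub_mul_sub_integral_le {s t M δ : ℝ} (hst : s ≤ t)
    (hF : ∀ u ∈ Icc s t, HasDerivAt F (f u) u) (hf : ContinuousOn f (Icc s t))
    (hφ : ContinuousOn φ (Icc s t)) (hM : ∀ u ∈ Icc s t, |f u| ≤ M)
    (hδ : ∀ u ∈ Icc s t, dist (φ u) (φ t) ≤ δ) :
    |(F t - F s) * φ t - ∫ u in s..t, f u * φ u| ≤ M * δ * (t - s) := by
  have hfi : IntervalIntegrable f volume s t := hf.intervalIntegrable_of_Icc hst
  have hFTC : ∫ u in s..t, f u = F t - F s :=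
    intervalIntegral.integral_eq_sub_of_hasDerivAt (by rwa [uIcc_of_le hst]) hfi
  have hdiff : (F t - F s) * φ t - ∫ u in s..t, f u * φ u =
      ∫ u in s..t, f u * (φ t - φ u) := by
    have hfφ : IntervalIntegrable (fun u => f u * φ u) volume s t :=
      (hf.mul hφ).intervalIntegrable_of_Icc hst
    rw [← hFTC, ← intervalIntegral.integral_mul_const,
      ← intervalIntegral.integral_sub (hfi.mul_const _) hfφ]
    simp only [mul_sub]
  have hbound : ∀ u ∈ uIoc s t, ‖f u * (φ t - φ u)‖ ≤ M * δ := fun u hu => by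
    have hu' : u ∈ Icc s t := Ioc_subset_Icc_self (uIoc_of_le hst ▸ hu)
    rw [norm_mul, ← dist_eq_norm, dist_comm]
    exact mul_le_mul (hM u hu') (hδ u hu') dist_nonneg ((abs_nonneg _).trans (hM u hu'))
  rw [hdiff, ← Real.norm_eq_abs]
  simpa [abs_of_nonneg (sub_nonneg.2 hst)] using
    intervalIntegral.norm_integral_le_of_norm_le_const hbound

theorem abs_sum_sub_mul_sub_integral_le {x : ℕ → ℝ} {m n : ℕ} {M η δ : ℝ} (hmn : m ≤ n)
    (hx : Monotone x) (hF : ∀ u ∈ Icc (x m) (x n), HasDerivAt F (f u) u)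
    (hf : ContinuousOn f (Icc (x m) (x n))) (hφ : ContinuousOn φ (Icc (x m) (x n)))
    (hM : ∀ u ∈ Icc (x m) (x n), |f u| ≤ M)
    (hδ : ∀ u ∈ Icc (x m) (x n), ∀ v ∈ Icc (x m) (x n), dist u v < η → dist (φ u) (φ v) ≤ δ)
    (hmesh : ∀ k ∈ Finset.Ico m n, x (k + 1) - x k < η) :
    |∑ k ∈ Finset.Ico m n, (F (x (k + 1)) - F (x k)) * φ (x (k + 1)) -
        ∫ u in x m..x n, f u * φ u| ≤ M * δ * (x n - x m) := by
  have hcell : ∀ k ∈ Finset.Ico m n, Icc (x k) (x (k + 1)) ⊆ Icc (x m) (x n) := fun k hk =>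
    Icc_subset_Icc (hx (Finset.mem_Ico.1 hk).1) (hx (Finset.mem_Ico.1 hk).2)
  have hstep : ∀ k, x k ≤ x (k + 1) := fun k => hx k.le_succ
  have hcells : ∑ k ∈ Finset.Ico m n, ∫ u in x k..x (k + 1), f u * φ u =
      ∫ u in x m..x n, f u * φ u :=
    intervalIntegral.sum_integral_adjacent_intervals_Ico hmn fun k hk =>
      ((hf.mul hφ).mono (hcell k (Finset.mem_Ico.2 hk))).intervalIntegrable_of_Icc (hstep k)
  rw [← hcells, ← Finset.sum_sub_distrib, ← Finset.sum_Ico_sub x hmn, Finset.mul_sum]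
  refine (Finset.abs_sum_le_sum_abs _ _).trans (Finset.sum_le_sum fun k hk => ?_)
  have hright : x (k + 1) ∈ Icc (x k) (x (k + 1)) := right_mem_Icc.2 (hstep k)
  refine abs_sub_mul_sub_integral_le (hstep k) (fun u hu => hF u (hcell k hk hu))
    (hf.mono (hcell k hk)) (hφ.mono (hcell k hk)) (fun u hu => hM u (hcell k hk hu))
    fun u hu => hδ u (hcell k hk hu) _ (hcell k hk hright) ?_
  rw [Real.dist_eq, abs_sub_comm, abs_of_nonneg (sub_nonneg.2 hu.2)]
  linarith [hu.1, hmesh k hk]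

theorem tendsto_sum_sub_mul_sub_integral_of_mesh {ι : Type*} {l : Filter ι} {a b : ℝ}
    (hF : ∀ u ∈ Icc a b, HasDerivAt F (f u) u) (hf : ContinuousOn f (Icc a b))
    (hφ : ContinuousOn φ (Icc a b)) {x : ι → ℕ → ℝ} {m n : ι → ℕ} (hx : ∀ j, Monotone (x j))
    (hpart : ∀ᶠ j in l, m j ≤ n j ∧ a ≤ x j (m j) ∧ x j (n j) ≤ b)
    (hmesh : ∀ η > 0, ∀ᶠ j in l, ∀ k ∈ Finset.Ico (m j) (n j), x j (k + 1) - x j k < η) :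
    Tendsto (fun j => ∑ k ∈ Finset.Ico (m j) (n j), (F (x j (k + 1)) - F (x j k)) *
      φ (x j (k + 1)) - ∫ u in x j (m j)..x j (n j), f u * φ u) l (𝓝 0) := by
  obtain ⟨M, hM⟩ := isCompact_Icc.exists_bound_of_continuousOn hf
  set C := |M| * |b - a| + 1
  have hC : 0 < C := by positivity
  refine Metric.tendsto_nhds.2 fun ε hε => ?_
  obtain ⟨η, hη, hφη⟩ := Metric.uniformContinuousOn_iff.1
    (isCompact_Icc.uniformContinuousOn_of_continuous hφ) (ε / C) (by positivity)
  filter_upwards [hpart, hmesh η hη] with j ⟨hmn, ha, hb⟩ hmesh_j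
  have hsub : Icc (x j (m j)) (x j (n j)) ⊆ Icc a b := Icc_subset_Icc ha hb
  rw [dist_zero_right, Real.norm_eq_abs]
  calc _ ≤ |M| * (ε / C) * (x j (n j) - x j (m j)) :=
        abs_sum_sub_mul_sub_integral_le hmn (hx j) (fun u hu => hF u (hsub hu)) (hf.mono hsub)
          (hφ.mono hsub) (fun u hu => (hM u (hsub hu)).trans (le_abs_self M))
          (fun u hu v hv huv => (hφη u (hsub hu) v (hsub hv) huv).le) hmesh_j
    _ ≤ |M| * (ε / C) * |b - a| := by
        gcongr
        exact (by linarith : x j (n j) - x j (m j) ≤ b - a).trans (le_abs_self _)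
    _ = ε * (|M| * |b - a|) / C := by ring
    _ < ε := by
        rw [div_lt_iff₀ hC]
        nlinarith

theorem natCeil_mul_sub_one_div_mem_Icc {c : ℝ} {T : ℕ} (hT : 0 < T) (hcT : 1 ≤ c * T) :
    (⌈c * T - 1⌉₊ : ℝ) / T ∈ Icc (c - 1 / T) c := by
  have hT' : (0 : ℝ) < T := Nat.cast_pos.2 hT
  have hceil := Nat.ceil_lt_add_one (sub_nonneg.2 hcT)
  constructor
  · rw [le_div_iff₀ hT', sub_mul, one_div_mul_cancel hT'.ne']
    exact Nat.le_ceil _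
  · rw [div_le_iff₀ hT']
    linarith

theorem tendsto_natCeil_mul_sub_one_div {c : ℝ} (hc : 0 < c) :
    Tendsto (fun T : ℕ => (⌈c * T - 1⌉₊ : ℝ) / T) atTop (𝓝 c) := by
  have hlower : Tendsto (fun T : ℕ => c - 1 / (T : ℝ)) atTop (𝓝 c) := by
    simpa using tendsto_one_div_atTop_nhds_zero_nat.const_sub c
  have hcT : ∀ᶠ T : ℕ in atTop, 1 ≤ c * T :=
    (tendsto_natCast_atTop_atTop.const_mul_atTop hc).eventually_ge_atTop 1
  have hmem : ∀ᶠ T : ℕ in atTop, (⌈c * T - 1⌉₊ : ℝ) / T ∈ Icc (c - 1 / T) c := by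
    filter_upwards [eventually_gt_atTop 0, hcT] with T hT hT'
    exact natCeil_mul_sub_one_div_mem_Icc hT hT'
  exact tendsto_of_tendsto_of_tendsto_of_le_of_le' hlower tendsto_const_nhds
    (hmem.mono fun _ hT => hT.1) (hmem.mono fun _ hT => hT.2)

theorem tendsto_sum_Ico_natCeil_sub_mul {a c : ℝ} (hac : a < c) (hc0 : 0 < c) (hc1 : c ≤ 1)
    (hF : ∀ u ∈ Icc a 1, HasDerivAt F (f u) u) (hf : ContinuousOn f (Icc a 1))
    (hφ : ContinuousOn φ (Icc a 1)) :
    Tendsto (fun T : ℕ => ∑ k ∈ Finset.Ico ⌈c * T - 1⌉₊ T,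
        (F ((k + 1 : ℕ) / T) - F (k / T)) * φ ((k + 1 : ℕ) / T))
      atTop (𝓝 (∫ u in c..1, f u * φ u)) := by
  set m : ℕ → ℕ := fun T => ⌈c * T - 1⌉₊
  have hlim : Tendsto (fun T : ℕ => (m T : ℝ) / T) atTop (𝓝 c) :=
    tendsto_natCeil_mul_sub_one_div hc0
  have hm : ∀ T : ℕ, m T ≤ T := fun T => Nat.ceil_le.2 <| by
    nlinarith [(Nat.cast_nonneg T : (0 : ℝ) ≤ T)]
  have hmem : ∀ᶠ T : ℕ in atTop, (m T : ℝ) / T ∈ Icc a 1 := by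
    filter_upwards [hlim.eventually (lt_mem_nhds hac)] with T hT
    exact ⟨hT.le, div_le_one_of_le₀ (Nat.cast_le.2 (hm T)) (Nat.cast_nonneg T)⟩
  have hsum := tendsto_sum_sub_mul_sub_integral_of_mesh hF hf hφ
    (x := fun (T k : ℕ) => (k : ℝ) / T) (m := m) (n := id)
    (fun T _ _ hkl => div_le_div_of_nonneg_right (Nat.cast_le.2 hkl) (Nat.cast_nonneg T))
    (hmem.mono fun T hT => ⟨hm T, hT.1, div_self_le_one _⟩)
    fun η hη => by
      filter_upwards [tendsto_one_div_atTop_nhds_zero_nat.eventually (gt_mem_nhds hη)]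
        with T hT k _
      simpa [add_div] using hT
  have hint : Tendsto (fun T : ℕ => ∫ u in (m T : ℝ) / T..1, f u * φ u) atTop
      (𝓝 (∫ u in c..1, f u * φ u)) := by
    have hIcc : uIcc a 1 = Icc a 1 := uIcc_of_le (hac.le.trans hc1)
    have hcont := intervalIntegral.continuousOn_primitive_interval_left
      (hIcc ▸ (hf.mul hφ).integrableOn_Icc (μ := volume))
    refine (hcont c (hIcc ▸ ⟨hac.le, hc1⟩)).tendsto.comp
      (tendsto_nhdsWithin_iff.2 ⟨hlim, hIcc ▸ hmem⟩)
  refine (zero_add (∫ u in c..1, f u * φ u) ▸ hsum.add hint).congr' ?_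
  filter_upwards [eventually_gt_atTop 0] with T hT
  simp only [id, div_self (Nat.cast_ne_zero.2 hT.ne' : (T : ℝ) ≠ 0), sub_add_cancel, m]

end RiemannStieltjes

theorem sum_Icc_ite_le_div_eq_sum_Ico {c : ℝ} {T : ℕ} (hT : 0 < T) (hcT : 1 < c * T)
    (g : ℕ → ℝ) :
    ∑ i ∈ Finset.Icc 2 T, (if c ≤ (i : ℝ) / T then g i else 0) =
      ∑ k ∈ Finset.Ico ⌈c * T - 1⌉₊ T, g (k + 1) := by
  have hceil : ⌈c * T - 1⌉₊ + 1 = ⌈c * T⌉₊ := by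
    rw [← Nat.ceil_add_one (by linarith), sub_add_cancel]
  have htwo : 2 ≤ ⌈c * T⌉₊ := Nat.lt_ceil.2 (by exact_mod_cast hcT)
  rw [← Finset.sum_filter, Finset.sum_Ico_add' g, hceil]
  refine Finset.sum_congr (Finset.ext fun i => ?_) fun _ _ => rfl
  rw [Finset.mem_filter, Finset.mem_Icc, Finset.mem_Ico, le_div_iff₀ (Nat.cast_pos.2 hT),
    ← Nat.ceil_le]
  omega

/-- Riemann-sum limit of the discrete-time ELBO terms: with a `C¹` schedule `α`
(derivative `α'`) satisfying `α_t < 1` on `(0,1]`, a continuous `h`, and a cutoff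
`ε ∈ (0,1)` avoiding the singularity at `0`, the sums
`Σ_{i=2}^T ((α((i−1)/T) − α(i/T))/(1 − α(i/T))) h(i/T)` (restricted to `i/T ≥ ε`)
converge as `T → ∞` to `−∫_ε^1 (α'_t/(1−α_t)) h(t) dt`. -/
theorem stmt13 (α α' h : ℝ → ℝ) (ε : ℝ) (hε0 : 0 < ε) (hε1 : ε < 1)
    (hd : ∀ t ∈ Set.Icc (0 : ℝ) 1, HasDerivAt α (α' t) t)
    (hc : ContinuousOn α' (Set.Icc (0 : ℝ) 1))
    (hlt : ∀ t ∈ Set.Ioc (0 : ℝ) 1, α t < 1)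
    (hh : Continuous h) :
    Tendsto
      (fun T : ℕ => ∑ i ∈ Finset.Icc 2 T,
        if ε ≤ (i : ℝ) / T then
          ((α (((i : ℝ) - 1) / T) - α ((i : ℝ) / T)) / (1 - α ((i : ℝ) / T)))
            * h ((i : ℝ) / T)
        else 0)
      atTop (𝓝 (-∫ t in ε..1, α' t / (1 - α t) * h t)) := by
  set φ : ℝ → ℝ := fun u => h u / (1 - α u)
  have hsub : Icc (ε / 2) 1 ⊆ Icc 0 1 := Icc_subset_Icc (by positivity) le_rfl
  have hφ : ContinuousOn φ (Icc (ε / 2) 1) :=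
    hh.continuousOn.div (continuousOn_const.sub fun t ht =>
      (hd t (hsub ht)).continuousAt.continuousWithinAt)
      fun u hu => sub_ne_zero.2 (hlt u ⟨by linarith [hu.1], hu.2⟩).ne'
  have hlim := (tendsto_sum_Ico_natCeil_sub_mul (by linarith) hε0 hε1.le
    (fun u hu => hd u (hsub hu)) (hc.mono hsub) hφ).neg
  have hintegrand : (fun u => α' u * φ u) = fun t => α' t / (1 - α t) * h t := by
    funext u
    simp only [φ]
    ring
  rw [hintegrand] at hlim
  refine hlim.congr' ?_
  filter_upwards [eventually_gt_atTop 0,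
    (tendsto_natCast_atTop_atTop.const_mul_atTop hε0).eventually_gt_atTop 1] with T hT hεT
  rw [sum_Icc_ite_le_div_eq_sum_Ico hT hεT, ← Finset.sum_neg_distrib]
  refine Finset.sum_congr rfl fun k _ => ?_
  simp only [φ, Nat.cast_add, Nat.cast_one, add_sub_cancel_right]
  ring
end
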